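/- Let G be a chordal graph with no infinite clique. Then G is the intersection graph of a set of subtrees of a tree. (Halin's theorem.) -/

import Mathlib

open Set

universe u

/-- The intersection graph of a family `F` of sets: vertices are the members of `F`,
two distinct members adjacent iff they intersect. -/
def IntGraph {W : Type u} (F : Set (Set W)) : SimpleGraph F where
  Adj S T := S ≠ T ∧ ((S : Set W) ∩ (T : Set W)).Nonempty
  symm := by
    constructor
    rintro S T ⟨h1, x, hx1, hx2⟩
    exact ⟨h1.symm, x, hx2, hx1⟩
  loopless := by constructor; rintro S ⟨h, _⟩; exact h rfl

/-- `G` has an induced cycle of length at least 4. -/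
def HasLongInducedCycle {V : Type u} (G : SimpleGraph V) : Prop :=
  ∃ n : ℕ, 4 ≤ n ∧ ∃ f : ZMod n → V, Function.Injective f ∧
    ∀ i j : ZMod n, G.Adj (f i) (f j) ↔ (j = i + 1 ∨ i = j + 1)

/-- A graph is chordal iff it has no induced cycle of length at least 4. -/
def Chordal {V : Type u} (G : SimpleGraph V) : Prop := ¬ HasLongInducedCycle G

/-- The chordal property for a family of sets: its intersection graph is chordal. -/
def ChordalProp {W : Type u} (F : Set (Set W)) : Prop := Chordal (IntGraph F)

/-- The finite Helly property: every nonempty finite subfamily whose members pairwise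
intersect has a common element. -/
def FiniteHelly {W : Type u} (F : Set (Set W)) : Prop :=
  ∀ R : Finset (Set W), R.Nonempty → ↑R ⊆ F →
    (∀ S ∈ R, ∀ T ∈ R, S ≠ T → (S ∩ T).Nonempty) →
    (⋂ S ∈ R, S).Nonempty

/-- A family `F` is well-founded if there is no sequence `(Sᵢ)` of members of `F` with
nonempty total intersection such that no partial intersection `S₀ ∩ ⋯ ∩ Sᵢ` is contained
in `S_{i+1}`. -/
def WellFoundedFamily {W : Type u} (F : Set (Set W)) : Prop :=
  ¬ ∃ S : ℕ → Set W, (∀ i, S i ∈ F) ∧ (⋂ i, S i).Nonempty ∧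
      ∀ i, ¬ (⋂ j ≤ i, S j) ⊆ S (i + 1)

/-- `X` is `F`-connected: for every partition of `X` into two nonempty parts, some
member of `F` included in `X` meets both parts. -/
def FConnected {W : Type u} (F : Set (Set W)) (X : Set W) : Prop :=
  ∀ A B : Set W, A ∪ B = X → A ∩ B = ∅ → A.Nonempty → B.Nonempty →
    ∃ S ∈ F, S ⊆ X ∧ (S ∩ A).Nonempty ∧ (S ∩ B).Nonempty

/-- A path-decomposition of `G` indexed by `Fin n`: bags cover all vertices and edges,
and for each vertex the set of indices of bags containing it is an interval. -/
def IsPathDecomp {V : Type u} (G : SimpleGraph V) {n : ℕ} (B : Fin n → Finset V) : Prop :=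
  (∀ v, ∃ i, v ∈ B i) ∧
  (∀ u v, G.Adj u v → ∃ i, u ∈ B i ∧ v ∈ B i) ∧
  (∀ v : V, ∀ i i' i'' : Fin n, i ≤ i' → i' ≤ i'' → v ∈ B i → v ∈ B i'' → v ∈ B i')

/-- `G` has path-width at most `k`: some path-decomposition has all bags of size ≤ k+1. -/
def PathWidthLE {V : Type u} (G : SimpleGraph V) (k : ℕ) : Prop :=
  ∃ (n : ℕ) (B : Fin n → Finset V), IsPathDecomp G B ∧ ∀ i, (B i).card ≤ k + 1

/-- `G` has line-width at most `k`: there is a decomposition indexed by a linearly ordered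
set, satisfying the path-decomposition axioms, with all bags of size ≤ k+1. -/
def LineWidthLE {V : Type u} (G : SimpleGraph V) (k : ℕ) : Prop :=
  ∃ (L : Type u) (r : L → L → Prop), IsLinearOrder L r ∧
    ∃ B : L → Finset V,
      (∀ v, ∃ i, v ∈ B i) ∧
      (∀ u v, G.Adj u v → ∃ i, u ∈ B i ∧ v ∈ B i) ∧
      (∀ v i i' i'', r i i' → r i' i'' → v ∈ B i → v ∈ B i'' → v ∈ B i') ∧
      ∀ i, (B i).card ≤ k + 1

/-!
Order the vertices so that the earlier neighbours of every vertex form a clique (finite, as there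
is no infinite clique). Joining each vertex to its latest earlier neighbour, and each vertex
without one to a new root `⊥`, gives a tree, and `x` is represented by the subtree spanned by `x`
and its later neighbours.

Such an order is found by Zorn's lemma among well-orders of subsets `D ⊆ V`, ordered by end
extension, that keep the earlier neighbours of each vertex a clique and also the neighbourhood in
`D` of every component `C` of `G - D`. If a maximal one misses a vertex, its component `C` sees a
finite clique `K` in `D`, and chordality provides a vertex of `C` adjacent to all of `K`: for
`K = K' ∪ {k}`, a shortest walk in `C` from a vertex complete to `K'` to a neighbour of `k` is an
induced path, and a vertex of `K'` missing its end would close a long induced cycle through `k`.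
Appending that vertex contradicts maximality.
-/

theorem ZMod.eq_add_one_iff_val_eq {n : ℕ} (hn : 2 ≤ n) (i j : ZMod n) :
    j = i + 1 ↔ j.val = if i.val + 1 = n then 0 else i.val + 1 := by
  have : NeZero n := ⟨by omega⟩
  rw [← (ZMod.val_injective n).eq_iff, ZMod.val_add, ZMod.val_one'' (by omega)]
  have := ZMod.val_lt i
  split_ifs with h
  · rw [h, Nat.mod_self]
  · rw [Nat.mod_eq_of_lt (by omega)]

namespace SimpleGraph

variable {V : Type*} {G : SimpleGraph V}

/-- Reachability in `G.induce X`, except that `G.ReachIn X a a` holds for every `a`. -/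
def ReachIn (G : SimpleGraph V) (X : Set V) : V → V → Prop :=
  Relation.ReflTransGen fun a b => G.Adj a b ∧ a ∈ X ∧ b ∈ X

def IsWalkIn (G : SimpleGraph V) (X : Set V) (q : ℕ → V) (m : ℕ) : Prop :=
  (∀ i < m, G.Adj (q i) (q (i + 1))) ∧ ∀ i ≤ m, q i ∈ X

section Walks

variable {X Y : Set V} {a b c : V} {q : ℕ → V} {m : ℕ}

theorem ReachIn.trans (hab : G.ReachIn X a b) (hbc : G.ReachIn X b c) : G.ReachIn X a c :=
  Relation.ReflTransGen.trans hab hbc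

theorem ReachIn.symm (h : G.ReachIn X a b) : G.ReachIn X b a := by
  induction h with
  | refl => exact .refl
  | tail _ hbc ih => exact .head ⟨hbc.1.symm, hbc.2.2, hbc.2.1⟩ ih

theorem ReachIn.mono (hXY : X ⊆ Y) (h : G.ReachIn X a b) : G.ReachIn Y a b :=
  Relation.ReflTransGen.mono (fun _ _ ⟨h, ha, hb⟩ => ⟨h, hXY ha, hXY hb⟩) _ _ h

theorem ReachIn.mem (h : G.ReachIn X a b) (ha : a ∈ X) : b ∈ X := by
  induction h with
  | refl => exact ha
  | tail _ hbc => exact hbc.2.2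

theorem Adj.reachIn (h : G.Adj a b) (ha : a ∈ X) (hb : b ∈ X) : G.ReachIn X a b :=
  Relation.ReflTransGen.single ⟨h, ha, hb⟩

theorem IsWalkIn.of_le (hq : G.IsWalkIn X q m) {n : ℕ} (hn : n ≤ m) : G.IsWalkIn X q n :=
  ⟨fun i hi => hq.1 i (by omega), fun i hi => hq.2 i (by omega)⟩

theorem IsWalkIn.reachIn (hq : G.IsWalkIn X q m) : G.ReachIn X (q 0) (q m) := by
  induction m with
  | zero => exact .refl
  | succ m ih =>
    exact (ih (hq.of_le m.le_succ)).tail ⟨hq.1 m m.lt_succ_self, hq.2 m (by omega), hq.2 _ le_rfl⟩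

theorem ReachIn.exists_isWalkIn (h : G.ReachIn X a b) (ha : a ∈ X) :
    ∃ q m, q 0 = a ∧ q m = b ∧ G.IsWalkIn X q m := by
  induction h with
  | refl => exact ⟨fun _ => a, 0, rfl, rfl, by simp, by simpa⟩
  | @tail b c _ hbc ih =>
    obtain ⟨q, m, hq0, rfl, hq⟩ := ih
    refine ⟨fun i => if i ≤ m then q i else c, m + 1, by simpa, by simp, fun i hi => ?_,
      fun i hi => ?_⟩
    · rcases (Nat.lt_succ_iff.mp hi).eq_or_lt with rfl | hi
      · simpa using hbc.1
      · simpa [hi.le, Nat.succ_le_of_lt hi] using hq.1 i hi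
    · by_cases h : i ≤ m
      · simpa [h] using hq.2 i h
      · simpa [h] using hbc.2.2

/-- Shortcut a walk along a chord `q a — q b`, dropping the `b - a - 1` vertices in between. -/
theorem IsWalkIn.skip (hq : G.IsWalkIn X q m) {a b : ℕ} (hab : a < b) (hb : b ≤ m)
    (h : G.Adj (q a) (q b)) :
    ∃ q', G.IsWalkIn X q' (m - (b - a - 1)) ∧ q' 0 = q 0 ∧ q' (m - (b - a - 1)) = q m := by
  refine ⟨fun i => if i ≤ a then q i else q (i + (b - a - 1)), ⟨fun i hi => ?_, fun i hi => ?_⟩,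
    by simp, ?_⟩
  · by_cases hia : i + 1 ≤ a
    · simpa [hia, (Nat.le_succ i).trans hia] using hq.1 i (by omega)
    by_cases hia' : i ≤ a
    · obtain rfl : i = a := by omega
      simpa [show i + 1 + (b - i - 1) = b by omega] using h
    · simpa [hia, hia', show i + 1 + (b - a - 1) = i + (b - a - 1) + 1 by omega]
        using hq.1 (i + (b - a - 1)) (by omega)
  · by_cases hia : i ≤ a
    · simpa [hia] using hq.2 i (by omega)
    · simpa [hia] using hq.2 _ (by omega)
  · simp only [if_neg (show ¬ m - (b - a - 1) ≤ a by omega),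
      Nat.sub_add_cancel (show b - a - 1 ≤ m by omega)]

end Walks

def IsInducedPath (G : SimpleGraph V) (p : ℕ → V) (m : ℕ) : Prop :=
  ∀ i j, i < j → j ≤ m → p i ≠ p j ∧ (G.Adj (p i) (p j) ↔ j = i + 1)

section InducedPath

variable {p : ℕ → V} {m : ℕ}

theorem IsInducedPath.shift (hp : G.IsInducedPath p m) (k : ℕ) :
    G.IsInducedPath (fun i => p (k + i)) (m - k) := fun i j hij hj => by
  obtain ⟨hne, hadj⟩ := hp (k + i) (k + j) (by omega) (by omega)
  exact ⟨hne, hadj.trans (by omega)⟩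

theorem IsInducedPath.snoc {y : V} (hp : G.IsInducedPath p m) (hy : ∀ i ≤ m, p i ≠ y)
    (hadj : ∀ i ≤ m, G.Adj (p i) y ↔ i = m) :
    G.IsInducedPath (fun i => if i = m + 1 then y else p i) (m + 1) := by
  intro i j hij hj
  rcases hj.eq_or_lt with rfl | hj
  · simp only [if_neg hij.ne, if_pos, hadj i (by omega)]
    exact ⟨hy i (by omega), by omega⟩
  · simpa [if_neg hj.ne, if_neg (hij.trans hj).ne] using hp i j hij (by omega)

end InducedPath

theorem hasLongInducedCycle_of_nat_indexed {n : ℕ} (hn : 4 ≤ n) (g : ℕ → V)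
    (hg : ∀ i j, i < j → j < n →
      g i ≠ g j ∧ (G.Adj (g i) (g j) ↔ j = i + 1 ∨ i = 0 ∧ j + 1 = n)) :
    HasLongInducedCycle G := by
  have : NeZero n := ⟨by omega⟩
  refine ⟨n, hn, fun i => g i.val, fun i j hij => ZMod.val_injective n ?_, fun i j => ?_⟩
  · by_contra hne
    rcases Nat.lt_or_gt_of_ne hne with h | h
    exacts [(hg _ _ h (ZMod.val_lt j)).1 hij, (hg _ _ h (ZMod.val_lt i)).1 hij.symm]
  · rw [ZMod.eq_add_one_iff_val_eq (by omega), ZMod.eq_add_one_iff_val_eq (by omega)]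
    have hi := ZMod.val_lt i
    have hj := ZMod.val_lt j
    rcases lt_trichotomy i.val j.val with h | h | h
    · rw [(hg _ _ h hj).2]
      split_ifs <;> omega
    · obtain rfl := ZMod.val_injective n h
      simp only [SimpleGraph.irrefl, false_iff]
      split_ifs <;> omega
    · rw [G.adj_comm, (hg _ _ h hi).2]
      split_ifs <;> omega

end SimpleGraph

namespace Chordal

open SimpleGraph

variable {V : Type*} {G : SimpleGraph V}

theorem exists_adj_of_isInducedPath (hG : Chordal G) {p : ℕ → V} {m : ℕ} {y : V}
    (hp : G.IsInducedPath p m) (hm : 2 ≤ m) (hy : ∀ i ≤ m, p i ≠ y) (h0 : G.Adj (p 0) y)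
    (hm' : G.Adj (p m) y) : ∃ i, 0 < i ∧ i < m ∧ G.Adj (p i) y := by
  by_contra! hnon
  have hadj : ∀ i ≤ m, G.Adj (p i) y ↔ i = 0 ∨ i = m := fun i hi =>
    ⟨fun h => by by_contra! h'; exact hnon i (by omega) (by omega) h,
      by rintro (rfl | rfl) <;> assumption⟩
  refine hG (hasLongInducedCycle_of_nat_indexed (n := m + 2) (by omega)
    (fun i => if i = m + 1 then y else p i) fun i j hij hj => ?_)
  rcases (Nat.lt_succ_iff.mp hj).eq_or_lt with rfl | hj
  · simp only [if_neg hij.ne, if_pos, hadj i (by omega), and_true]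
    exact ⟨hy i (by omega), by omega⟩
  · simp only [if_neg hj.ne, if_neg (hij.trans hj).ne]
    rw [(hp i j hij (by omega)).2]
    exact ⟨(hp i j hij (by omega)).1, by omega⟩

/-- Otherwise `y`, its last neighbour `p J` on the path, `p (J + 1), …, p m` and `z` would form
a long induced cycle. -/
theorem adj_last_of_isInducedPath (hG : Chordal G) {p : ℕ → V} {m : ℕ} {y z : V}
    (hp : G.IsInducedPath p m) (hz : ∀ i ≤ m, p i ≠ z ∧ (G.Adj (p i) z ↔ i = m))
    (hy : ∀ i ≤ m, p i ≠ y) (hyz : G.Adj z y) (h0 : G.Adj (p 0) y) : G.Adj (p m) y := by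
  classical
  by_contra hm
  set J := Nat.findGreatest (fun j => G.Adj (p j) y) m
  have hJ : G.Adj (p J) y := Nat.findGreatest_spec (P := fun j => G.Adj (p j) y) m.zero_le h0
  have hJm : J < m := (Nat.findGreatest_le m).lt_of_ne fun h => hm (h ▸ hJ)
  obtain ⟨i, hi0, him, hi⟩ := hG.exists_adj_of_isInducedPath
    ((hp.shift J).snoc (fun i hi => (hz _ (by omega)).1)
      fun i hi => (hz _ (by omega)).2.trans (by omega)) (by omega)
    (fun i hi => by split_ifs <;> [exact hyz.ne; exact hy _ (by omega)])
    (by simpa [if_neg (show 0 ≠ m - J + 1 by omega)] using hJ) (by simpa using hyz)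
  rw [if_neg (by omega)] at hi
  exact Nat.findGreatest_is_greatest (show J < J + i by omega) (by omega) hi

variable {X : Set V} {c₀ : V}

/-- A shortest walk in `X` from a vertex complete to `K` to a neighbour of `k` is an induced
path seeing `k` only at its end, so by `adj_last_of_isInducedPath` its end is complete to `K`. -/
theorem exists_reachIn_adj_insert (hG : Chordal G) (hc₀ : c₀ ∈ X) {K : Set V} {k : V}
    (hK : G.IsClique (insert k K)) (hKX : ∀ k' ∈ insert k K, k' ∉ X)
    (hv : ∃ v, G.ReachIn X c₀ v ∧ ∀ k' ∈ K, G.Adj k' v)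
    (hk : ∃ c, G.ReachIn X c₀ c ∧ G.Adj k c) :
    ∃ v, G.ReachIn X c₀ v ∧ ∀ k' ∈ insert k K, G.Adj k' v := by
  classical
  obtain ⟨v, hv, hvK⟩ := hv
  obtain ⟨c, hc, hkc⟩ := hk
  let P : ℕ → Prop := fun m => ∃ q, G.IsWalkIn X q m ∧ G.ReachIn X c₀ (q 0) ∧
    (∀ k' ∈ K, G.Adj k' (q 0)) ∧ G.Adj (q m) k
  have hP : ∃ m, P m := by
    obtain ⟨q, m, rfl, rfl, hq⟩ := (hv.symm.trans hc).exists_isWalkIn (hv.mem hc₀)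
    exact ⟨m, q, hq, hv, hvK, hkc.symm⟩
  obtain ⟨q, hq, hq0, hq0K, hqk⟩ := Nat.find_spec hP
  set L := Nat.find hP
  have hmin : ∀ m < L, ¬ P m := fun m => Nat.find_min hP
  have hk_last : ∀ i < L, ¬ G.Adj (q i) k := fun i hi h =>
    hmin i hi ⟨q, hq.of_le hi.le, hq0, hq0K, h⟩
  have hchord : ∀ a b, a + 2 ≤ b → b ≤ L → ¬ G.Adj (q a) (q b) := fun a b hab hb h => by
    obtain ⟨q', hq', h0, hL⟩ := hq.skip (by omega) hb h
    exact hmin _ (by omega) ⟨q', hq', h0 ▸ hq0, h0 ▸ hq0K, hL ▸ hqk⟩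
  have hpath : G.IsInducedPath q L := fun a b hab hb => by
    refine ⟨fun he => ?_, fun h => by by_contra; exact hchord a b (by omega) hb h,
      fun h => h ▸ hq.1 a (by omega)⟩
    rcases hb.eq_or_lt with rfl | hb
    · exact hk_last a hab (he ▸ hqk)
    · exact hchord a (b + 1) (by omega) hb (he ▸ hq.1 b hb)
  have hqK : ∀ i ≤ L, ∀ k' ∈ insert k K, q i ≠ k' := fun i hi k' hk' he =>
    hKX k' hk' (he ▸ hq.2 i hi)
  refine ⟨q L, hq0.trans hq.reachIn, fun k' hk' => ?_⟩
  rcases eq_or_ne k' k with rfl | hne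
  · exact hqk.symm
  refine (hG.adj_last_of_isInducedPath hpath (fun i hi => ⟨hqK i hi k (by simp), ?_⟩)
    (fun i hi => hqK i hi k' hk') (hK (by simp) hk' hne.symm)
    (hq0K k' (hk'.resolve_left hne)).symm).symm
  exact ⟨fun h => by by_contra; exact hk_last i (by omega) h, fun h => h ▸ hqk⟩

theorem exists_reachIn_forall_adj (hG : Chordal G) (hc₀ : c₀ ∈ X) (K : Finset V)
    (hK : G.IsClique (K : Set V)) (hKX : ∀ k ∈ K, k ∉ X)
    (hnbr : ∀ k ∈ K, ∃ c, G.ReachIn X c₀ c ∧ G.Adj k c) :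
    ∃ v, G.ReachIn X c₀ v ∧ ∀ k ∈ K, G.Adj k v := by
  classical
  induction K using Finset.induction_on with
  | empty => exact ⟨c₀, .refl, by simp⟩
  | insert k K _ ih =>
    rw [Finset.coe_insert] at hK
    simpa using hG.exists_reachIn_adj_insert hc₀ hK (by simpa using hKX)
      (ih (hK.subset (Set.subset_insert _ _)) (fun k' hk' => hKX k' (by simp [hk']))
        fun k' hk' => hnbr k' (by simp [hk'])) (hnbr k (by simp))

end Chordal

section PartialWellOrder

variable {V : Type*}

/-- `R a b` reads `a ≤ b`, and `R` well-orders its domain `{a | R a a}`. -/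
structure IsPartialWellOrder (R : V → V → Prop) : Prop where
  refl_left : ∀ ⦃a b⦄, R a b → R a a
  refl_right : ∀ ⦃a b⦄, R a b → R b b
  antisymm : ∀ ⦃a b⦄, R a b → R b a → a = b
  trans : ∀ ⦃a b c⦄, R a b → R b c → R a c
  total : ∀ ⦃a b⦄, R a a → R b b → R a b ∨ R b a
  exists_min : ∀ B : Set V, B.Nonempty → (∀ b ∈ B, R b b) → ∃ l ∈ B, ∀ x ∈ B, R l x

/-- `R'` extends `R` by new elements placed above the whole domain of `R`. -/
def IsEndExtension (R R' : V → V → Prop) : Prop :=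
  R ≤ R' ∧ ∀ a b, R b b → R' a b → R a b

theorem IsEndExtension.trans {R₁ R₂ R₃ : V → V → Prop} (h₁₂ : IsEndExtension R₁ R₂)
    (h₂₃ : IsEndExtension R₂ R₃) : IsEndExtension R₁ R₃ :=
  ⟨h₁₂.1.trans h₂₃.1, fun a b hb hab => h₁₂.2 a b hb (h₂₃.2 a b (h₁₂.1 b b hb) hab)⟩

theorem sSup_rel_iff {c : Set (V → V → Prop)} {a b : V} : sSup c a b ↔ ∃ R ∈ c, R a b := by
  simp

namespace IsChain

variable {c : Set (V → V → Prop)} (hc : IsChain IsEndExtension c)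
include hc

theorem exists_mem_rel_rel {a b a' b' : V} (h : sSup c a b) (h' : sSup c a' b') :
    ∃ R ∈ c, R a b ∧ R a' b' := by
  obtain ⟨R₁, h₁, hab⟩ := sSup_rel_iff.mp h
  obtain ⟨R₂, h₂, hab'⟩ := sSup_rel_iff.mp h'
  rcases eq_or_ne R₁ R₂ with rfl | hne
  · exact ⟨R₁, h₁, hab, hab'⟩
  rcases hc h₁ h₂ hne with h | h
  exacts [⟨R₂, h₂, h.1 _ _ hab, hab'⟩, ⟨R₁, h₁, hab, h.1 _ _ hab'⟩]

theorem isEndExtension_sSup {R : V → V → Prop} (hR : R ∈ c) : IsEndExtension R (sSup c) := by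
  refine ⟨le_sSup hR, fun a b hb hab => ?_⟩
  obtain ⟨R', hR', hab⟩ := sSup_rel_iff.mp hab
  rcases eq_or_ne R R' with rfl | hne
  · exact hab
  rcases hc hR hR' hne with h | h
  exacts [h.2 a b hb hab, h.1 a b hab]

theorem isPartialWellOrder_sSup (hwo : ∀ R ∈ c, IsPartialWellOrder R) :
    IsPartialWellOrder (sSup c) := by
  refine ⟨fun a b hab => ?_, fun a b hab => ?_, fun a b hab hba => ?_, fun a b d hab hbd => ?_,
    fun a b ha hb => ?_, fun B ⟨b₀, hb₀⟩ hB => ?_⟩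
  · obtain ⟨R, hR, hab⟩ := sSup_rel_iff.mp hab
    exact le_sSup hR _ _ ((hwo R hR).refl_left hab)
  · obtain ⟨R, hR, hab⟩ := sSup_rel_iff.mp hab
    exact le_sSup hR _ _ ((hwo R hR).refl_right hab)
  · obtain ⟨R, hR, hab, hba⟩ := hc.exists_mem_rel_rel hab hba
    exact (hwo R hR).antisymm hab hba
  · obtain ⟨R, hR, hab, hbd⟩ := hc.exists_mem_rel_rel hab hbd
    exact le_sSup hR _ _ ((hwo R hR).trans hab hbd)
  · obtain ⟨R, hR, ha, hb⟩ := hc.exists_mem_rel_rel ha hb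
    exact ((hwo R hR).total ha hb).imp (le_sSup hR _ _) (le_sSup hR _ _)
  obtain ⟨R₀, h₀, hb₀R⟩ := sSup_rel_iff.mp (hB b₀ hb₀)
  obtain ⟨l, ⟨hlB, hl⟩, hmin⟩ := (hwo R₀ h₀).exists_min {x ∈ B | R₀ x x} ⟨b₀, hb₀, hb₀R⟩
    fun _ hx => hx.2
  refine ⟨l, hlB, fun x hx => ?_⟩
  obtain ⟨R, hR, hll, hxx⟩ := hc.exists_mem_rel_rel (le_sSup h₀ _ _ hl) (hB x hx)
  rcases (hwo R hR).total hll hxx with hlx | hxl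
  · exact le_sSup hR _ _ hlx
  · have hxl₀ := (hc.isEndExtension_sSup h₀).2 x l hl (le_sSup hR _ _ hxl)
    exact le_sSup h₀ _ _ (hmin x ⟨hx, (hwo R₀ h₀).refl_left hxl₀⟩)

end IsChain

def appendTop (R : V → V → Prop) (v : V) : V → V → Prop :=
  fun a b => R a b ∨ (R a a ∨ a = v) ∧ b = v

variable {R : V → V → Prop} {v : V}

theorem appendTop_of_ne {a b : V} (hb : b ≠ v) : appendTop R v a b ↔ R a b := by
  simp [appendTop, hb]

theorem appendTop_self_iff {a : V} : appendTop R v a a ↔ R a a ∨ a = v := by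
  unfold appendTop
  constructor
  · rintro (h | ⟨-, rfl⟩)
    exacts [Or.inl h, Or.inr rfl]
  · rintro (h | rfl)
    exacts [Or.inl h, Or.inr ⟨Or.inr rfl, rfl⟩]

theorem isEndExtension_appendTop (hv : ¬ R v v) : IsEndExtension R (appendTop R v) :=
  ⟨fun _ _ h => Or.inl h, fun a b hb => by
    rintro (h | ⟨-, rfl⟩)
    exacts [h, (hv hb).elim]⟩

theorem IsPartialWellOrder.appendTop (hR : IsPartialWellOrder R) (hv : ¬ R v v) :
    IsPartialWellOrder (_root_.appendTop R v) := by
  have hgt : ∀ {a}, ¬ R v a := fun h => hv (hR.refl_left h)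
  refine ⟨?_, ?_, ?_, ?_, ?_, ?_⟩ <;> simp only [_root_.appendTop]
  · rintro a b (h | ⟨h | rfl, -⟩)
    exacts [Or.inl (hR.refl_left h), Or.inl h, Or.inr ⟨Or.inr rfl, rfl⟩]
  · rintro a b (h | ⟨-, rfl⟩)
    exacts [Or.inl (hR.refl_right h), Or.inr ⟨Or.inr rfl, rfl⟩]
  · rintro a b (h | ⟨-, rfl⟩) (h' | ⟨-, rfl⟩)
    exacts [hR.antisymm h h', (hgt h).elim, (hgt h').elim, rfl]
  · rintro a b d (h | ⟨ha, rfl⟩) (h' | ⟨-, rfl⟩)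
    exacts [Or.inl (hR.trans h h'), Or.inr ⟨Or.inl (hR.refl_left h), rfl⟩, (hgt h').elim,
      Or.inr ⟨ha, rfl⟩]
  · rintro a b (ha | ⟨-, rfl⟩) (hb | ⟨-, rfl⟩)
    · exact (hR.total ha hb).imp Or.inl Or.inl
    · exact Or.inl (Or.inr ⟨Or.inl ha, rfl⟩)
    · exact Or.inr (Or.inr ⟨Or.inl hb, rfl⟩)
    · exact Or.inl (Or.inr ⟨Or.inr rfl, rfl⟩)
  · intro B hB hdom
    by_cases hBR : ∃ b ∈ B, R b b
    · obtain ⟨l, ⟨hlB, hl⟩, hmin⟩ := hR.exists_min {b ∈ B | R b b} hBR fun _ hb => hb.2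
      refine ⟨l, hlB, fun x hx => ?_⟩
      rcases hdom x hx with hx' | ⟨-, rfl⟩
      exacts [Or.inl (hmin x ⟨hx, hR.refl_left hx'⟩), Or.inr ⟨Or.inl hl, rfl⟩]
    · have hBv : ∀ b ∈ B, b = v := fun b hb => ((hdom b hb).resolve_left
        fun h => hBR ⟨b, hb, hR.refl_left h⟩).2
      obtain ⟨b, hb⟩ := hB
      exact ⟨b, hb, fun x hx => Or.inr ⟨Or.inr (hBv b hb), hBv x hx⟩⟩

theorem IsPartialWellOrder.isWellOrder (hR : IsPartialWellOrder R) (hfull : ∀ a, R a a) :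
    IsWellOrder V fun a b => R a b ∧ a ≠ b where
  trichotomous a b hab hba := by
    rcases hR.total (hfull a) (hfull b) with h | h
    exacts [not_not.mp fun hne => hab ⟨h, hne⟩, not_not.mp fun hne => hba ⟨h, Ne.symm hne⟩]
  wf := WellFounded.wellFounded_iff_has_min.mpr fun B hB => by
    obtain ⟨l, hl, hmin⟩ := hR.exists_min B hB fun b _ => hfull b
    exact ⟨l, hl, fun x hx hxl => hxl.2 (hR.antisymm hxl.1 (hmin x hx))⟩

end PartialWellOrder

namespace SimpleGraph

variable {V : Type*} {G : SimpleGraph V}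

/-- The neighbours in `D` of the component of `G - D` containing `c`. -/
def compNbhd (G : SimpleGraph V) (D : Set V) (c : V) : Set V :=
  {k ∈ D | ∃ c', G.ReachIn Dᶜ c c' ∧ G.Adj k c'}

section CompNbhd

variable {D D' : Set V} {c c₀ v : V}

theorem compNbhd_inter_subset (h : D ⊆ D') : G.compNbhd D' c ∩ D ⊆ G.compNbhd D c :=
  fun _ ⟨⟨_, c', hc', hkc'⟩, hkD⟩ => ⟨hkD, c', hc'.mono (Set.compl_subset_compl.mpr h), hkc'⟩

/-- When `v` sees the component of `c` in `G - (D ∪ {v})`, that component lies in the component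
of `v` in `G - D`. -/
theorem compNbhd_insert_subset (hc : c ∉ insert v D) (hc₀v : G.ReachIn Dᶜ c₀ v) (hvD : v ∉ D)
    (hv : v ∈ G.compNbhd (insert v D) c) :
    G.compNbhd (insert v D) c ⊆ insert v (G.compNbhd D c₀) := by
  rintro k ⟨rfl | hkD, c', hc', hkc'⟩
  · exact Set.mem_insert _ _
  obtain ⟨-, c'', hc'', hvc''⟩ := hv
  have hsub : (insert v D)ᶜ ⊆ Dᶜ := Set.compl_subset_compl.mpr (Set.subset_insert _ _)
  refine Or.inr ⟨hkD, c', hc₀v.trans ?_, hkc'⟩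
  exact (hvc''.reachIn hvD (hsub (hc''.mem hc))).trans ((hc''.symm.trans hc').mono hsub)

end CompNbhd

structure IsPartialElimOrder (G : SimpleGraph V) (R : V → V → Prop) : Prop
    extends IsPartialWellOrder R where
  isClique_lower : ∀ v, G.IsClique {u | R u v ∧ G.Adj u v}
  isClique_compNbhd : ∀ c, ¬ R c c → G.IsClique (G.compNbhd {x | R x x} c)

theorem isPartialElimOrder_sSup {c : Set (V → V → Prop)} (hc : IsChain IsEndExtension c)
    (hR : ∀ R ∈ c, G.IsPartialElimOrder R) : G.IsPartialElimOrder (sSup c) := by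
  refine ⟨hc.isPartialWellOrder_sSup fun R hR' => (hR R hR').toIsPartialWellOrder, ?_, ?_⟩
  · rintro v x ⟨hxv, hx⟩ y ⟨hyv, hy⟩ hxy
    obtain ⟨R, hR', hxv, hyv⟩ := hc.exists_mem_rel_rel hxv hyv
    exact (hR R hR').isClique_lower v ⟨hxv, hx⟩ ⟨hyv, hy⟩ hxy
  · intro c₀ hc₀ x hx y hy hxy
    obtain ⟨R, hR', hxx, hyy⟩ := hc.exists_mem_rel_rel hx.1 hy.1
    have hsub : {a | R a a} ⊆ {a | sSup c a a} := fun a ha => le_sSup hR' a a ha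
    exact (hR R hR').isClique_compNbhd c₀ (fun h => hc₀ (hsub h))
      (compNbhd_inter_subset hsub ⟨hx, hxx⟩) (compNbhd_inter_subset hsub ⟨hy, hyy⟩) hxy

theorem IsPartialElimOrder.appendTop {R : V → V → Prop} (hR : G.IsPartialElimOrder R)
    {c₀ v : V} (hc₀ : ¬ R c₀ c₀) (hv : G.ReachIn {x | R x x}ᶜ c₀ v)
    (hvK : ∀ k ∈ G.compNbhd {x | R x x} c₀, G.Adj k v) :
    G.IsPartialElimOrder (_root_.appendTop R v) := by
  have hvR : ¬ R v v := hv.mem hc₀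
  have hdom : {x | _root_.appendTop R v x x} = insert v {x | R x x} := by
    ext x
    simp [appendTop_self_iff, or_comm]
  refine ⟨hR.toIsPartialWellOrder.appendTop hvR, fun w => ?_, fun c hc => ?_⟩
  · rcases eq_or_ne w v with rfl | hw
    · refine (hR.isClique_compNbhd c₀ hc₀).subset ?_
      rintro u ⟨hu | ⟨hu | rfl, -⟩, huw⟩
      · exact (hvR (hR.refl_right hu)).elim
      · exact ⟨hu, w, hv, huw⟩
      · exact (huw.ne rfl).elim
    · simpa only [appendTop_of_ne hw] using hR.isClique_lower w
  replace hc : c ∉ insert v {x | R x x} := hdom ▸ hc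
  rw [hdom]
  by_cases hvc : v ∈ G.compNbhd (insert v {x | R x x}) c
  · exact (isClique_insert.mpr ⟨hR.isClique_compNbhd c₀ hc₀, fun k hk _ => (hvK k hk).symm⟩).subset
      (compNbhd_insert_subset hc hv hvR hvc)
  · refine (hR.isClique_compNbhd c fun h => hc (Or.inr h)).subset fun k hk => ?_
    refine compNbhd_inter_subset (Set.subset_insert _ _) ⟨hk, ?_⟩
    rcases hk.1 with rfl | hkD
    exacts [(hvc hk).elim, hkD]

end SimpleGraph

namespace Chordal

variable {V : Type*} {G : SimpleGraph V}

theorem exists_isPartialElimOrder_refl (hG : Chordal G) (hfin : ∀ s, G.IsClique s → s.Finite) :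
    ∃ R, G.IsPartialElimOrder R ∧ ∀ v, R v v := by
  obtain ⟨⟨M, hM⟩, hmax⟩ := exists_maximal_of_chains_bounded
    (r := fun R R' : {R // G.IsPartialElimOrder R} => IsEndExtension R.1 R'.1)
    (fun c hc => by
      have hc' : IsChain IsEndExtension (Subtype.val '' c) :=
        hc.image (⟨Subtype.val, id⟩ : _ →r (IsEndExtension : (V → V → Prop) → _ → Prop))
      exact ⟨⟨_, SimpleGraph.isPartialElimOrder_sSup hc' (by simp +contextual)⟩,
        fun R hR => hc'.isEndExtension_sSup ⟨R, hR, rfl⟩⟩)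
    fun h h' => h.trans h'
  refine ⟨M, hM, fun c₀ => by_contra fun hc₀ => ?_⟩
  have hK := hM.isClique_compNbhd c₀ hc₀
  have hKfin : ∀ k, k ∈ (hfin _ hK).toFinset ↔ k ∈ G.compNbhd {x | M x x} c₀ :=
    fun _ => Set.Finite.mem_toFinset _
  obtain ⟨v, hv, hvK⟩ := hG.exists_reachIn_forall_adj (X := {x | M x x}ᶜ) hc₀
    (hfin _ hK).toFinset (by simpa using hK) (fun k hk => by simpa using ((hKfin k).mp hk).1)
    fun k hk => ((hKfin k).mp hk).2
  have hvM : ¬ M v v := hv.mem hc₀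
  exact hvM ((hmax ⟨_, hM.appendTop hc₀ hv fun k hk => hvK k ((hKfin k).mpr hk)⟩
    (isEndExtension_appendTop hvM)).1 v v (appendTop_self_iff.mpr (Or.inr rfl)))

theorem exists_wellOrder_isClique_lower (hG : Chordal G)
    (hfin : ∀ s, G.IsClique s → s.Finite) :
    ∃ _ : LinearOrder V, WellFoundedLT V ∧ ∀ v, G.IsClique {u | u < v ∧ G.Adj u v} := by
  obtain ⟨R, hR, hfull⟩ := hG.exists_isPartialElimOrder_refl hfin
  have hwo := hR.isWellOrder hfull
  let := IsWellOrder.linearOrder fun a b => R a b ∧ a ≠ b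
  refine ⟨this, ⟨hwo.wf⟩, fun v => (hR.isClique_lower v).subset ?_⟩
  rintro u ⟨⟨huv, -⟩, hu⟩
  exact ⟨huv, hu⟩

end Chordal

namespace SimpleGraph

section ParentGraph

variable {α : Type*} [LinearOrder α] {par : α → α}

def parentGraph (par : α → α) : SimpleGraph α :=
  fromRel fun a b => b = par a ∧ b < a

theorem parentGraph_adj {a b : α} :
    (parentGraph par).Adj a b ↔ (b = par a ∧ b < a) ∨ (a = par b ∧ a < b) := by
  rw [parentGraph, fromRel_adj, and_iff_right_iff_imp]
  rintro (⟨-, h⟩ | ⟨-, h⟩)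
  exacts [h.ne', h.ne]

theorem eq_parent_of_parentGraph_adj {a b : α} (h : (parentGraph par).Adj a b) (hba : b ≤ a) :
    b = par a :=
  (parentGraph_adj.mp h).elim And.left fun h => absurd hba h.2.not_ge

/-- On a cycle, both neighbours of the largest vertex would have to be its parent. -/
theorem isAcyclic_parentGraph (par : α → α) : (parentGraph par).IsAcyclic := by
  classical
  intro v c hc
  obtain ⟨m, hm, hmax⟩ := c.support.toFinset.exists_max_image id ⟨v, by simp⟩
  rw [List.mem_toFinset] at hm
  have hc' := hc.rotate hm
  have hpar : ∀ u ∈ (c.rotate m hm).support, (parentGraph par).Adj m u → u = par m :=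
    fun u hu h => eq_parent_of_parentGraph_adj h <| hmax u <| List.mem_toFinset.mpr <|
      (c.mem_support_rotate_iff m hm).mp hu
  exact hc'.snd_ne_penultimate <|
    (hpar _ (Walk.getVert_mem_support ..) (Walk.adj_snd hc'.not_nil)).trans
      (hpar _ (Walk.getVert_mem_support ..) (Walk.adj_penultimate hc'.not_nil).symm).symm

variable [WellFoundedLT α]

theorem isTree_parentGraph [OrderBot α] (hpar : ∀ a, a ≠ ⊥ → par a < a) :
    (parentGraph par).IsTree := by
  have hbot : ∀ a, (parentGraph par).Reachable a ⊥ := by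
    intro a
    induction a using WellFoundedLT.induction with
    | _ a ih =>
      rcases eq_or_ne a ⊥ with rfl | ha
      · rfl
      · exact (parentGraph_adj.mpr (Or.inl ⟨rfl, hpar a ha⟩)).reachable.trans
          (ih _ (hpar a ha))
  exact ⟨⟨fun a b => (hbot a).trans (hbot b).symm⟩, isAcyclic_parentGraph par⟩

theorem connected_induce_parentGraph {s : Set α} {r : α} (hr : r ∈ s)
    (hs : ∀ a ∈ s, a ≠ r → par a ∈ s ∧ par a < a) : ((parentGraph par).induce s).Connected := by
  have hreach : ∀ a (ha : a ∈ s), ((parentGraph par).induce s).Reachable ⟨a, ha⟩ ⟨r, hr⟩ := by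
    intro a
    induction a using WellFoundedLT.induction with
    | _ a ih =>
      intro ha
      rcases eq_or_ne a r with rfl | har
      · rfl
      obtain ⟨hpa, hlt⟩ := hs a ha har
      have hadj : ((parentGraph par).induce s).Adj ⟨a, ha⟩ ⟨par a, hpa⟩ :=
        parentGraph_adj.mpr (Or.inl ⟨rfl, hlt⟩)
      exact hadj.reachable.trans (ih _ hlt hpa)
  have : Nonempty s := ⟨⟨r, hr⟩⟩
  exact ⟨fun ⟨a, ha⟩ ⟨b, hb⟩ => (hreach a ha).trans (hreach b hb).symm⟩

end ParentGraph

section UpperClosedNbhd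

variable {V : Type*} [LinearOrder V] {G : SimpleGraph V}

def upperClosedNbhd (G : SimpleGraph V) (x : V) : Set V :=
  {w | w = x ∨ x < w ∧ G.Adj x w}

theorem adj_iff_upperClosedNbhd_inter_nonempty (hcl : ∀ v, G.IsClique {u | u < v ∧ G.Adj u v})
    {x y : V} : G.Adj x y ↔ x ≠ y ∧ (G.upperClosedNbhd x ∩ G.upperClosedNbhd y).Nonempty := by
  refine ⟨fun hxy => ⟨hxy.ne, ?_⟩, ?_⟩
  · rcases hxy.ne.lt_or_gt with hlt | hlt
    · exact ⟨y, Or.inr ⟨hlt, hxy⟩, Or.inl rfl⟩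
    · exact ⟨x, Or.inl rfl, Or.inr ⟨hlt, hxy.symm⟩⟩
  rintro ⟨hne, w, hwx | ⟨hxw, hGxw⟩, hwy | ⟨hyw, hGyw⟩⟩
  · exact absurd (hwx.symm.trans hwy) hne
  · exact hwx ▸ hGyw.symm
  · exact hwy ▸ hGxw
  · exact hcl w ⟨hxw, hGxw⟩ ⟨hyw, hGyw⟩ hne

variable [WellFoundedLT V]

theorem exists_subtree_repr_of_wellOrder (hcl : ∀ v, G.IsClique {u | u < v ∧ G.Adj u v})
    (hfin : ∀ v, {u | u < v ∧ G.Adj u v}.Finite) :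
    ∃ (T : SimpleGraph (WithBot V)) (t : V → Set (WithBot V)), T.IsTree ∧
      (∀ x, (T.induce (t x)).Connected) ∧ ∀ x y, G.Adj x y ↔ x ≠ y ∧ (t x ∩ t y).Nonempty := by
  set N : V → Finset V := fun v => (hfin v).toFinset
  have hN : ∀ {u v}, u ∈ N v ↔ u < v ∧ G.Adj u v := fun {u v} => (hfin v).mem_toFinset
  set par : WithBot V → WithBot V := fun a => a.recBotCoe ⊥ fun v => (N v).max
  have hpar : ∀ a, a ≠ ⊥ → par a < a := by
    intro a ha
    lift a to V using ha
    cases hm : (N a).max using WithBot.recBotCoe with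
    | bot => simp [par, hm]
    | coe g => simpa [par, hm] using (hN.mp (Finset.mem_of_max hm)).1
  have hpar_mem : ∀ x w, w ∈ G.upperClosedNbhd x → w ≠ x →
      par w ∈ (↑) '' G.upperClosedNbhd x := by
    rintro x w (rfl | ⟨hxw, hGxw⟩) hwx
    · exact (hwx rfl).elim
    obtain ⟨g, hg⟩ := Finset.max_of_mem (hN.mpr ⟨hxw, hGxw⟩)
    have hgw := hN.mp (Finset.mem_of_max hg)
    rcases (Finset.le_max_of_eq (hN.mpr ⟨hxw, hGxw⟩) hg).eq_or_lt with rfl | hxg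
    · exact ⟨x, Or.inl rfl, hg.symm⟩
    · exact ⟨g, Or.inr ⟨hxg, hcl w ⟨hxw, hGxw⟩ hgw hxg.ne⟩, hg.symm⟩
  refine ⟨parentGraph par, fun x => (↑) '' G.upperClosedNbhd x, isTree_parentGraph hpar,
    fun x => connected_induce_parentGraph ⟨x, Or.inl rfl, rfl⟩ ?_, fun x y => ?_⟩
  · rintro _ ⟨w, hw, rfl⟩ hwx
    exact ⟨hpar_mem x w hw (by rintro rfl; exact hwx rfl), hpar _ WithBot.coe_ne_bot⟩
  · rw [← Set.image_inter WithBot.coe_injective, Set.image_nonempty]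
    exact adj_iff_upperClosedNbhd_inter_nonempty hcl

end UpperClosedNbhd

end SimpleGraph

/-- Halin's theorem: a chordal graph with no infinite clique is the intersection graph
of a family of subtrees of a tree. -/
theorem stmt11 {V : Type u} (G : SimpleGraph V) (hchordal : Chordal G)
    (h : ∀ s : Set V, G.IsClique s → s.Finite) :
    ∃ (W : Type u) (T : SimpleGraph W) (t : V → Set W), T.IsTree ∧
      (∀ x : V, (T.induce (t x)).Connected) ∧
      ∀ x y : V, G.Adj x y ↔ x ≠ y ∧ (t x ∩ t y).Nonempty := by
  obtain ⟨_, _, hcl⟩ := hchordal.exists_wellOrder_isClique_lower h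
  obtain ⟨T, t, hT⟩ := SimpleGraph.exists_subtree_repr_of_wellOrder hcl fun v => h _ (hcl v)
  exact ⟨WithBot V, T, t, hT⟩
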